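/- For every integer r ≥ 1, every extreme point of the convex set 𝒜_r* = { (a_1,...,a_r) ∈ ℝ^r : Σ_{j=1}^r a_j = r(r+1)/2, and Σ_{j∈E} a_j ≥ |E|(|E|+1)/2 for every subset E ⊆ {1,...,r} } is a permutation of the vector (1, 2, ..., r). -/

import Mathlib

/-!
The tight sets of a point `a ∈ 𝒜_r*`, those `E` with `∑_{j ∈ E} a_j = |E|(|E|+1)/2`, form a chain:
by strict supermodularity of `k ↦ k(k+1)/2`, two incomparable tight sets `E, F` would force
`∑_{E ∪ F} a + ∑_{E ∩ F} a` below its lower bound. At an extreme point the indicator vectors of the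
tight sets span `ℝ^r`, since otherwise `a` could be perturbed along a direction orthogonal to all of
them; in particular every two coordinates are separated by a tight set. Hence for each `i`, the
largest tight set `P` avoiding `i` and the smallest tight set containing `i` differ by `{i}` alone,
so `a_i = |P| + 1`, and `i ↦ |P|` is injective because tight sets of equal size coincide.
-/

/-- `𝒜_r*` : the set of a ∈ ℝ^r with Σ a_j = r(r+1)/2 and Σ_{j∈E} a_j ≥ |E|(|E|+1)/2
for every subset E of the index set. -/
def Astar (r : ℕ) : Set (Fin r → ℝ) :=
  {a : Fin r → ℝ |
    (∑ j, a j) = (r : ℝ) * ((r : ℝ) + 1) / 2 ∧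
    ∀ E : Finset (Fin r), (E.card : ℝ) * ((E.card : ℝ) + 1) / 2 ≤ ∑ j ∈ E, a j}

open Finset Filter Topology

def IsTight {r : ℕ} (a : Fin r → ℝ) (E : Finset (Fin r)) : Prop :=
  ∑ j ∈ E, a j = (#E : ℝ) * ((#E : ℝ) + 1) / 2

lemma IsTight.apply_eq_card_add_one {r : ℕ} {a : Fin r → ℝ} {P : Finset (Fin r)} {i : Fin r}
    (hP : IsTight a P) (hiP : i ∉ P) (hiP' : IsTight a (insert i P)) : a i = #P + 1 := by
  unfold IsTight at hP hiP'
  rw [sum_insert hiP, card_insert_of_notMem hiP, hP] at hiP'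
  push_cast at hiP'
  linarith

namespace Astar

variable {r : ℕ} {a : Fin r → ℝ}

lemma isTight_univ (ha : a ∈ Astar r) : IsTight a univ := by
  simpa [IsTight] using ha.1

lemma subset_or_subset_of_isTight (ha : a ∈ Astar r) {E F : Finset (Fin r)}
    (hE : IsTight a E) (hF : IsTight a F) : E ⊆ F ∨ F ⊆ E := by
  by_contra! h
  have hEU : #E < #(E ∪ F) := card_lt_card (left_lt_sup.2 h.2)
  have hFU : #F < #(E ∪ F) := card_lt_card (right_lt_sup.2 h.1)
  have hcard : (#(E ∪ F) : ℝ) + #(E ∩ F) = #E + #F := by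
    exact_mod_cast card_union_add_card_inter E F
  have hsum : ∑ j ∈ E ∪ F, a j + ∑ j ∈ E ∩ F, a j = ∑ j ∈ E, a j + ∑ j ∈ F, a j := sum_union_inter
  have hU := ha.2 (E ∪ F)
  have hI := ha.2 (E ∩ F)
  have hEU' : (#E : ℝ) + 1 ≤ #(E ∪ F) := by exact_mod_cast hEU
  have hFU' : (#F : ℝ) + 1 ≤ #(E ∪ F) := by exact_mod_cast hFU
  unfold IsTight at hE hF
  nlinarith

lemma subset_of_isTight_of_card_le (ha : a ∈ Astar r) {E F : Finset (Fin r)}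
    (hE : IsTight a E) (hF : IsTight a F) (hEF : #E ≤ #F) : E ⊆ F :=
  (subset_or_subset_of_isTight ha hE hF).elim id fun hFE => (eq_of_subset_of_card_le hFE hEF).ge

lemma eq_zero_of_forall_isTight_sum_eq_zero (ha : a ∈ (Astar r).extremePoints ℝ) {d : Fin r → ℝ}
    (hd : ∀ E, IsTight a E → ∑ j ∈ E, d j = 0) : d = 0 := by
  have hsum (t : ℝ) (E : Finset (Fin r)) :
      ∑ j ∈ E, (a + t • d) j = ∑ j ∈ E, a j + t * ∑ j ∈ E, d j := by
    simp [sum_add_distrib, mul_sum]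
  have hnear : ∀ᶠ t : ℝ in 𝓝 0, a + t • d ∈ Astar r := by
    refine (eventually_all.2 fun E => ?_).mono fun t ht => ⟨?_, ht⟩
    · by_cases hE : IsTight a E
      · exact .of_forall fun t => by rw [hsum, hd E hE, mul_zero, add_zero, hE]
      · have hslack := lt_of_le_of_ne (ha.1.2 E) (Ne.symm hE)
        have hcont : Continuous fun t : ℝ => ∑ j ∈ E, a j + t * ∑ j ∈ E, d j := by fun_prop
        filter_upwards [hcont.tendsto 0 |>.eventually (lt_mem_nhds (by simpa using hslack))]
          with t ht using (hsum t E).symm ▸ ht.le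
    · rw [hsum, hd _ (isTight_univ ha.1), mul_zero, add_zero]
      exact ha.1.1
  obtain ⟨ε, hε, hball⟩ := Metric.eventually_nhds_iff.1 hnear
  have hplus := hball (y := ε / 2) (by simp [abs_of_pos hε]; linarith)
  have hminus := hball (y := -(ε / 2)) (by simp [abs_of_pos hε]; linarith)
  have hmid : a ∈ openSegment ℝ (a + (ε / 2) • d) (a + -(ε / 2) • d) :=
    ⟨1 / 2, 1 / 2, by norm_num, by norm_num, by norm_num, by ext; simp; ring⟩
  have := ha.2 hplus hminus hmid
  rw [add_eq_left, smul_eq_zero] at this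
  exact this.resolve_left (by positivity)

lemma eq_of_forall_isTight_mem_iff (ha : a ∈ (Astar r).extremePoints ℝ) {i j : Fin r}
    (h : ∀ E, IsTight a E → (i ∈ E ↔ j ∈ E)) : i = j := by
  have hd := eq_zero_of_forall_isTight_sum_eq_zero ha (d := Pi.single i 1 - Pi.single j 1)
    fun E hE => by simp [sum_sub_distrib, sum_pi_single', h E hE]
  have := congrFun hd i
  by_contra hij
  simp [hij] at this

lemma exists_isTight_insert (ha : a ∈ (Astar r).extremePoints ℝ) (i : Fin r) :
    ∃ P, i ∉ P ∧ IsTight a P ∧ IsTight a (insert i P) := by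
  classical
  obtain ⟨P, hP, hPmax⟩ := exists_max_image (univ.filter fun E => IsTight a E ∧ i ∉ E) card
    ⟨∅, mem_filter.2 ⟨mem_univ _, by simp [IsTight], notMem_empty i⟩⟩
  obtain ⟨M, hM, hMmin⟩ := exists_min_image (univ.filter fun E => IsTight a E ∧ i ∈ E) card
    ⟨univ, by simp [isTight_univ ha.1]⟩
  simp only [mem_filter, mem_univ, true_and] at hP hM hPmax hMmin
  have hbelow : ∀ G, IsTight a G → i ∉ G → G ⊆ P := fun G hG hiG =>
    subset_of_isTight_of_card_le ha.1 hG hP.1 (hPmax G ⟨hG, hiG⟩)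
  have habove : ∀ G, IsTight a G → i ∈ G → M ⊆ G := fun G hG hiG =>
    subset_of_isTight_of_card_le ha.1 hM.1 hG (hMmin G ⟨hG, hiG⟩)
  suffices hMP : M = insert i P from ⟨P, hP.2, hP.1, hMP ▸ hM.1⟩
  have hPM : P ⊆ M := (subset_or_subset_of_isTight ha.1 hP.1 hM.1).resolve_right
    fun hMP => hP.2 (hMP hM.2)
  refine Subset.antisymm (fun j hjM => ?_) (insert_subset hM.2 hPM)
  by_contra hj
  rw [mem_insert, not_or] at hj
  refine hj.1 (eq_of_forall_isTight_mem_iff ha fun G hG => ?_).symm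
  exact ⟨fun hiG => habove G hG hiG hjM,
    fun hjG => by_contra fun hiG => hj.2 (hbelow G hG hiG hjG)⟩

lemma eq_of_isTight_insert_of_card_eq (ha : a ∈ Astar r) {i j : Fin r} {P Q : Finset (Fin r)}
    (hiP : i ∉ P) (hjQ : j ∉ Q) (hP : IsTight a P) (hQ : IsTight a Q)
    (hiP' : IsTight a (insert i P)) (hjQ' : IsTight a (insert j Q)) (hcard : #P = #Q) :
    i = j := by
  have hQP := subset_of_isTight_of_card_le ha hQ hP hcard.ge
  have hins := subset_of_isTight_of_card_le ha hiP' hjQ'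
    (by rw [card_insert_of_notMem hiP, card_insert_of_notMem hjQ, hcard])
  rcases mem_insert.1 (hins (mem_insert_self i P)) with h | h
  · exact h
  · exact absurd (hQP h) hiP

end Astar

theorem stmt_8_general (r : ℕ) (a : Fin r → ℝ)
    (ha : a ∈ Set.extremePoints ℝ (Astar r)) :
    ∃ σ : Equiv.Perm (Fin r), a = fun i => ((σ i : ℕ) : ℝ) + 1 := by
  choose P hiP hP hiP' using Astar.exists_isTight_insert ha
  have hlt (i : Fin r) : #(P i) < r :=
    (card_lt_card (ssubset_insert (hiP i))).trans_le
      (card_le_univ _ |>.trans_eq (Fintype.card_fin r))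
  have hinj : Function.Injective fun i => (⟨#(P i), hlt i⟩ : Fin r) := fun i j hij =>
    Astar.eq_of_isTight_insert_of_card_eq ha.1 (hiP i) (hiP j) (hP i) (hP j) (hiP' i) (hiP' j)
      (congrArg Fin.val hij)
  refine ⟨Equiv.ofBijective _ (Finite.injective_iff_bijective.1 hinj), funext fun i => ?_⟩
  exact (hP i).apply_eq_card_add_one (hiP i) (hiP' i)

/-- every extreme point of 𝒜_r* is a permutation of (1, 2, ..., r). -/
theorem stmt_8 (r : ℕ) (hr : 1 ≤ r) (a : Fin r → ℝ)
    (ha : a ∈ Set.extremePoints ℝ (Astar r)) :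
    ∃ σ : Equiv.Perm (Fin r), a = fun i => ((σ i : ℕ) : ℝ) + 1 :=
  stmt_8_general r a ha
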